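/- Let G=(V,E,w) be a similarity ground-truth input and consider the recursive pivot algorithm: pick a vertex p ∈ V; let w_1 > w_2 > … > w_k be the distinct weights of edges incident to p and set B_i = {v : w(p,v) = w_i}; recursively apply the algorithm to each induced subgraph G[B_i] to obtain trees T_1,…,T_k; let T*_0 be the single-vertex tree on p and, for 1 ≤ i ≤ k, let T*_i be the tree whose root has children the roots of T*_{i−1} and T_i; output T*_k. Then the output tree is a generating tree for G, and hence has optimal cost for every admissible objective function. The key structural fact is: for all u ∈ B_i and v ∈ B_j with i < j, w(u,v) = w(p,v) = w_j. -/

import Mathlib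

open scoped BigOperators

attribute [local instance] Classical.propDecidable

noncomputable section

/-! ### Cluster trees -/

/-- A (binary, rooted) hierarchical-clustering tree whose leaves are labelled by
vertices of `V`. -/
inductive ClusterTree (V : Type) : Type where
  | leaf : V → ClusterTree V
  | node : ClusterTree V → ClusterTree V → ClusterTree V

namespace ClusterTree

variable {V : Type}

/-- The list of leaf labels of the tree (left-to-right). -/
def leavesList : ClusterTree V → List V
  | leaf v => [v]
  | node L R => leavesList L ++ leavesList R

/-- The set of leaf labels of the tree. -/
def leaves [DecidableEq V] (T : ClusterTree V) : Finset V :=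
  T.leavesList.toFinset

end ClusterTree

section Defs

variable {V : Type}

/-- `T` is a cluster tree for the whole (finite) vertex set `V`: its leaves are
pairwise distinct and exhaust the vertices. -/
def IsClusterTree [DecidableEq V] [Fintype V] (T : ClusterTree V) : Prop :=
  T.leavesList.Nodup ∧ T.leaves = Finset.univ

/-- `IsSubtreeOf s T` : `s` occurs as a rooted subtree of `T`. -/
def IsSubtreeOf : ClusterTree V → ClusterTree V → Prop
  | s, ClusterTree.leaf v => s = ClusterTree.leaf v
  | s, ClusterTree.node L R => s = ClusterTree.node L R ∨ IsSubtreeOf s L ∨ IsSubtreeOf s R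

/-- The subtree of `T` rooted at the lowest common ancestor of the leaves `x` and `y`. -/
def lcaSubtree [DecidableEq V] : ClusterTree V → V → V → ClusterTree V
  | ClusterTree.leaf v, _, _ => ClusterTree.leaf v
  | ClusterTree.node L R, x, y =>
    if x ∈ L.leaves ∧ y ∈ L.leaves then lcaSubtree L x y
    else if x ∈ R.leaves ∧ y ∈ R.leaves then lcaSubtree R x y
    else ClusterTree.node L R

/-- `w(A, B) = ∑_{a ∈ A, b ∈ B} w a b`. -/
def cutWeight (w : V → V → ℝ) (A B : Finset V) : ℝ := ∑ a ∈ A, ∑ b ∈ B, w a b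

/-- `w(A) = ∑_{a, b ∈ A} w a b` (ordered pairs; each edge counted twice). -/
def innerWeight (w : V → V → ℝ) (A : Finset V) : ℝ := ∑ a ∈ A, ∑ b ∈ A, w a b

/-- `∑_{e ∈ E} w(e)`, for a symmetric weight function with zero diagonal. -/
def totalWeight [Fintype V] (w : V → V → ℝ) : ℝ := (∑ u : V, ∑ v : V, w u v) / 2

/-- Cost of a cluster tree: each internal node `N` with children `N₁, N₂`
contributes `w(V(N₁), V(N₂)) · g(|V(N₁)|, |V(N₂)|)`. -/
def treeCost [DecidableEq V] (w : V → V → ℝ) (g : ℕ → ℕ → ℝ) : ClusterTree V → ℝ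
  | ClusterTree.leaf _ => 0
  | ClusterTree.node L R =>
      cutWeight w L.leaves R.leaves * g L.leaves.card R.leaves.card
        + treeCost w g L + treeCost w g R

/-- Dasgupta's cost (= `treeCost` with `g (a, b) = a + b`). -/
def dasguptaCost [DecidableEq V] (w : V → V → ℝ) : ClusterTree V → ℝ
  | ClusterTree.leaf _ => 0
  | ClusterTree.node L R =>
      ((L.leaves.card + R.leaves.card : ℕ) : ℝ) * cutWeight w L.leaves R.leaves
        + dasguptaCost w L + dasguptaCost w R

/-! ### Generating trees -/

/-- `T` is a generating tree for the similarity graph `w` : there is a nonnegative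
weight function on the internal nodes, non-increasing from leaves towards the root,
realizing every edge weight at the corresponding LCA. -/
def IsGenerating [DecidableEq V] (w : V → V → ℝ) (T : ClusterTree V) : Prop :=
  ∃ W : ClusterTree V → ℝ,
    (∀ s, IsSubtreeOf s T → 0 ≤ W s) ∧
    (∀ L R, IsSubtreeOf (ClusterTree.node L R) T →
      ∀ s, IsSubtreeOf s L ∨ IsSubtreeOf s R → W (ClusterTree.node L R) ≤ W s) ∧
    (∀ x y, x ∈ T.leaves → y ∈ T.leaves → x ≠ y → w x y = W (lcaSubtree T x y))

/-- Generating tree in the dissimilarity setting (weights non-decreasing from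
leaves towards the root). -/
def IsGeneratingDissim [DecidableEq V] (w : V → V → ℝ) (T : ClusterTree V) : Prop :=
  ∃ W : ClusterTree V → ℝ,
    (∀ s, IsSubtreeOf s T → 0 ≤ W s) ∧
    (∀ L R, IsSubtreeOf (ClusterTree.node L R) T →
      ∀ s, IsSubtreeOf s L ∨ IsSubtreeOf s R → W s ≤ W (ClusterTree.node L R)) ∧
    (∀ x y, x ∈ T.leaves → y ∈ T.leaves → x ≠ y → w x y = W (lcaSubtree T x y))

/-- Strictly generating tree (similarity setting). -/
def IsStrictlyGenerating [DecidableEq V] (w : V → V → ℝ) (T : ClusterTree V) : Prop :=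
  ∃ W : ClusterTree V → ℝ,
    (∀ s, IsSubtreeOf s T → 0 ≤ W s) ∧
    (∀ L R, IsSubtreeOf (ClusterTree.node L R) T →
      ∀ s, IsSubtreeOf s L ∨ IsSubtreeOf s R → W (ClusterTree.node L R) < W s) ∧
    (∀ x y, x ∈ T.leaves → y ∈ T.leaves → x ≠ y → w x y = W (lcaSubtree T x y))

/-- Strictly generating tree (dissimilarity setting). -/
def IsStrictlyGeneratingDissim [DecidableEq V] (w : V → V → ℝ) (T : ClusterTree V) : Prop :=
  ∃ W : ClusterTree V → ℝ,
    (∀ s, IsSubtreeOf s T → 0 ≤ W s) ∧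
    (∀ L R, IsSubtreeOf (ClusterTree.node L R) T →
      ∀ s, IsSubtreeOf s L ∨ IsSubtreeOf s R → W s < W (ClusterTree.node L R)) ∧
    (∀ x y, x ∈ T.leaves → y ∈ T.leaves → x ≠ y → w x y = W (lcaSubtree T x y))

/-! ### Ultrametrics and ground-truth inputs -/

/-- `d` is an ultrametric on `V`. -/
def IsUltrametric (d : V → V → ℝ) : Prop :=
  (∀ x, d x x = 0) ∧ (∀ x y, d x y = 0 → x = y) ∧ (∀ x y, d x y = d y x) ∧
  (∀ x y, 0 ≤ d x y) ∧ (∀ x y z, d x y ≤ max (d x z) (d y z))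

/-- `w` is a similarity graph generated from an ultrametric via a
non-increasing nonnegative function `f`. -/
def GeneratedFromUltrametric (w : V → V → ℝ) : Prop :=
  ∃ (d : V → V → ℝ) (f : ℝ → ℝ),
    IsUltrametric d ∧
    (∀ a b : ℝ, 0 ≤ a → a ≤ b → f b ≤ f a) ∧
    (∀ a : ℝ, 0 ≤ a → 0 ≤ f a) ∧
    (∀ x y : V, x ≠ y → w x y = f (d x y))

/-- `w` is a dissimilarity graph generated from an ultrametric via a
non-decreasing nonnegative function `f`. -/
def GeneratedFromUltrametricDissim (w : V → V → ℝ) : Prop :=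
  ∃ (d : V → V → ℝ) (f : ℝ → ℝ),
    IsUltrametric d ∧
    (∀ a b : ℝ, 0 ≤ a → a ≤ b → f a ≤ f b) ∧
    (∀ a : ℝ, 0 ≤ a → 0 ≤ f a) ∧
    (∀ x y : V, x ≠ y → w x y = f (d x y))

/-- `w` is a similarity graph generated from a *minimal* ultrametric:
pairs with equal weights are at equal ultrametric distance. -/
def GeneratedFromMinimalUltrametric (w : V → V → ℝ) : Prop :=
  ∃ (d : V → V → ℝ) (f : ℝ → ℝ),
    IsUltrametric d ∧
    (∀ a b : ℝ, 0 ≤ a → a ≤ b → f b ≤ f a) ∧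
    (∀ a : ℝ, 0 ≤ a → 0 ≤ f a) ∧
    (∀ x y : V, x ≠ y → w x y = f (d x y)) ∧
    (∀ u v u' v' : V, u ≠ v → u' ≠ v' → f (d u v) = f (d u' v') → d u v = d u' v')

/-- Dissimilarity analogue of `GeneratedFromMinimalUltrametric`. -/
def GeneratedFromMinimalUltrametricDissim (w : V → V → ℝ) : Prop :=
  ∃ (d : V → V → ℝ) (f : ℝ → ℝ),
    IsUltrametric d ∧
    (∀ a b : ℝ, 0 ≤ a → a ≤ b → f a ≤ f b) ∧
    (∀ a : ℝ, 0 ≤ a → 0 ≤ f a) ∧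
    (∀ x y : V, x ≠ y → w x y = f (d x y)) ∧
    (∀ u v u' v' : V, u ≠ v → u' ≠ v' → f (d u v) = f (d u' v') → d u v = d u' v')

/-- `w` is a `δ`-adversarially-perturbed (similarity) ground-truth input. -/
def IsDeltaPerturbedGroundTruth (w : V → V → ℝ) (δ : ℝ) : Prop :=
  ∃ (d : V → V → ℝ) (f : ℝ → ℝ),
    IsUltrametric d ∧
    (∀ a b : ℝ, 0 ≤ a → a ≤ b → f b ≤ f a) ∧
    (∀ a : ℝ, 0 ≤ a → 0 ≤ f a) ∧
    (∀ x y : V, x ≠ y → f (d x y) ≤ w x y ∧ w x y ≤ δ * f (d x y))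

end Defs

/-- The unit-weight clique on `V`. -/
def cliqueW (V : Type) [DecidableEq V] : V → V → ℝ := fun x y => if x = y then 0 else 1

/-- Admissibility of a cost function (similarity setting): on every similarity graph
generated from a minimal ultrametric, a cluster tree minimizes the cost
iff it is a generating tree. -/
def Admissible (g : ℕ → ℕ → ℝ) : Prop :=
  ∀ (V : Type) [Fintype V] [DecidableEq V] (w : V → V → ℝ),
    GeneratedFromMinimalUltrametric w →
    ∀ T : ClusterTree V, IsClusterTree T →
      ((∀ T' : ClusterTree V, IsClusterTree T' → treeCost w g T ≤ treeCost w g T')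
        ↔ IsGenerating w T)

/-- Admissibility of a value function (dissimilarity setting): on every dissimilarity
graph generated from a minimal ultrametric, a cluster tree maximizes the value
iff it is a generating tree. -/
def AdmissibleDissim (g : ℕ → ℕ → ℝ) : Prop :=
  ∀ (V : Type) [Fintype V] [DecidableEq V] (w : V → V → ℝ),
    GeneratedFromMinimalUltrametricDissim w →
    ∀ T : ClusterTree V, IsClusterTree T →
      ((∀ T' : ClusterTree V, IsClusterTree T' → treeCost w g T' ≤ treeCost w g T)
        ↔ IsGeneratingDissim w T)

/-! ### Agglomerative (linkage) algorithms, modelled as a nondeterministic relation -/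

/-- The initial state of an agglomerative algorithm: all singleton trees. -/
def initState (V : Type) [Fintype V] : Multiset (ClusterTree V) :=
  Finset.univ.val.map ClusterTree.leaf

/-- One merge step of a generic linkage algorithm: merge two candidate trees whose
leaf-set distance `D` is best (w.r.t. `better a b` = "`a` is at least as good as `b`")
among all candidate pairs; any tie-breaking choice is allowed. -/
inductive MergeStep {V : Type} [DecidableEq V] (D : Finset V → Finset V → ℝ)
    (better : ℝ → ℝ → Prop) :
    Multiset (ClusterTree V) → Multiset (ClusterTree V) → Prop where
  | step : ∀ (rest : Multiset (ClusterTree V)) (T1 T2 : ClusterTree V),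
      (∀ (T1' T2' : ClusterTree V) (rest' : Multiset (ClusterTree V)),
          T1 ::ₘ T2 ::ₘ rest = T1' ::ₘ T2' ::ₘ rest' →
          better (D T1.leaves T2.leaves) (D T1'.leaves T2'.leaves)) →
      MergeStep D better (T1 ::ₘ T2 ::ₘ rest) (ClusterTree.node T1 T2 ::ₘ rest)

/-- `T` is a possible output of the linkage algorithm with dissimilarity/similarity
measure `D` and preference `better`. -/
def IsLinkageOutput {V : Type} [Fintype V] [DecidableEq V]
    (D : Finset V → Finset V → ℝ) (better : ℝ → ℝ → Prop) (T : ClusterTree V) : Prop :=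
  Relation.ReflTransGen (MergeStep D better) (initState V) {T}

/-- Average-linkage measure. -/
def avgDist {V : Type} (w : V → V → ℝ) (A B : Finset V) : ℝ :=
  cutWeight w A B / ((A.card : ℝ) * (B.card : ℝ))

/-- Single-linkage measure: `min_{x ∈ A, y ∈ B} w x y`. -/
def minLinkDist {V : Type} [DecidableEq V] (w : V → V → ℝ) (A B : Finset V) : ℝ :=
  WithTop.untopD 0 (((A ×ˢ B).image fun p => w p.1 p.2).min)

/-- Complete-linkage measure: `max_{x ∈ A, y ∈ B} w x y`. -/
def maxLinkDist {V : Type} [DecidableEq V] (w : V → V → ℝ) (A B : Finset V) : ℝ :=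
  WithBot.unbotD 0 (((A ×ˢ B).image fun p => w p.1 p.2).max)

/-! ### Cuts -/

section Cuts

variable {V : Type}

/-- `A ⊕ x` : add `x` to `A` if absent, remove it if present. -/
def symmDiffV [DecidableEq V] (A : Finset V) (x : V) : Finset V :=
  if x ∈ A then A.erase x else insert x A

/-- `(A, B)` is an `ε/|A ∪ B|`-locally-densest cut of the induced subgraph on `A ∪ B`. -/
def IsLocallyDensestCut [DecidableEq V] (w : V → V → ℝ) (ε : ℝ) (A B : Finset V) : Prop :=
  ∀ x ∈ A ∪ B,
    cutWeight w (symmDiffV A x) (symmDiffV B x) /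
        (((symmDiffV A x).card : ℝ) * ((symmDiffV B x).card : ℝ)) ≤
      (1 + ε / ((A ∪ B).card : ℝ)) *
        (cutWeight w A B / ((A.card : ℝ) * (B.card : ℝ)))

/-- Cluster trees obtained by recursively splitting along `ε/n`-locally-densest cuts. -/
def IsRecLocallyDensestCutTree [DecidableEq V] (w : V → V → ℝ) (ε : ℝ) :
    ClusterTree V → Prop
  | ClusterTree.leaf _ => True
  | ClusterTree.node L R =>
      IsLocallyDensestCut w ε L.leaves R.leaves ∧
      IsRecLocallyDensestCutTree w ε L ∧ IsRecLocallyDensestCutTree w ε R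

/-- Cluster trees obtained by recursively splitting along `φ`-approximate sparsest cuts. -/
def IsRecApproxSparsestCutTree [DecidableEq V] (w : V → V → ℝ) (φ : ℝ) :
    ClusterTree V → Prop
  | ClusterTree.leaf _ => True
  | ClusterTree.node L R =>
      (∀ S : Finset V, S ⊆ L.leaves ∪ R.leaves → S.Nonempty → S ⊂ L.leaves ∪ R.leaves →
        cutWeight w L.leaves R.leaves / ((L.leaves.card : ℝ) * (R.leaves.card : ℝ)) ≤
          φ * (cutWeight w S ((L.leaves ∪ R.leaves) \ S) /
            ((S.card : ℝ) * (((L.leaves ∪ R.leaves) \ S).card : ℝ)))) ∧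
      IsRecApproxSparsestCutTree w φ L ∧ IsRecApproxSparsestCutTree w φ R

/-- Cluster trees obtained by recursively splitting along exact sparsest cuts. -/
def IsRecSparsestCutTree [DecidableEq V] (w : V → V → ℝ) : ClusterTree V → Prop
  | ClusterTree.leaf _ => True
  | ClusterTree.node L R =>
      (∀ S : Finset V, S ⊆ L.leaves ∪ R.leaves → S.Nonempty → S ⊂ L.leaves ∪ R.leaves →
        cutWeight w L.leaves R.leaves / ((L.leaves.card : ℝ) * (R.leaves.card : ℝ)) ≤
          cutWeight w S ((L.leaves ∪ R.leaves) \ S) /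
            ((S.card : ℝ) * (((L.leaves ∪ R.leaves) \ S).card : ℝ))) ∧
      IsRecSparsestCutTree w L ∧ IsRecSparsestCutTree w R

/-- Cluster trees obtained by recursively splitting along exact densest cuts. -/
def IsRecDensestCutTree [DecidableEq V] (w : V → V → ℝ) : ClusterTree V → Prop
  | ClusterTree.leaf _ => True
  | ClusterTree.node L R =>
      (∀ S : Finset V, S ⊆ L.leaves ∪ R.leaves → S.Nonempty → S ⊂ L.leaves ∪ R.leaves →
        cutWeight w S ((L.leaves ∪ R.leaves) \ S) /
            ((S.card : ℝ) * (((L.leaves ∪ R.leaves) \ S).card : ℝ)) ≤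
          cutWeight w L.leaves R.leaves / ((L.leaves.card : ℝ) * (R.leaves.card : ℝ))) ∧
      IsRecDensestCutTree w L ∧ IsRecDensestCutTree w R

/-- Cluster trees produced by the bisection 2-Center algorithm (similarity setting). -/
def IsBisection2CenterTree [DecidableEq V] (w : V → V → ℝ) : ClusterTree V → Prop
  | ClusterTree.leaf _ => True
  | ClusterTree.node L R =>
      (∃ u ∈ L.leaves ∪ R.leaves, ∃ v ∈ L.leaves ∪ R.leaves, u ≠ v ∧
        (∃ r : ℝ,
          (∀ x ∈ L.leaves ∪ R.leaves, r ≤ max (w x u) (w x v)) ∧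
          (∀ u' ∈ L.leaves ∪ R.leaves, ∀ v' ∈ L.leaves ∪ R.leaves, u' ≠ v' →
            ∃ x ∈ L.leaves ∪ R.leaves, max (w x u') (w x v') ≤ r)) ∧
        L.leaves = (L.leaves ∪ R.leaves).filter fun x => w x v ≤ w x u) ∧
      IsBisection2CenterTree w L ∧ IsBisection2CenterTree w R

/-- Cluster trees produced by the bisection 2-Center algorithm (dissimilarity setting). -/
def IsBisection2CenterTreeDissim [DecidableEq V] (w : V → V → ℝ) : ClusterTree V → Prop
  | ClusterTree.leaf _ => True
  | ClusterTree.node L R =>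
      (∃ u ∈ L.leaves ∪ R.leaves, ∃ v ∈ L.leaves ∪ R.leaves, u ≠ v ∧
        (∃ r : ℝ,
          (∀ x ∈ L.leaves ∪ R.leaves, min (w x u) (w x v) ≤ r) ∧
          (∀ u' ∈ L.leaves ∪ R.leaves, ∀ v' ∈ L.leaves ∪ R.leaves, u' ≠ v' →
            ∃ x ∈ L.leaves ∪ R.leaves, r ≤ min (w x u') (w x v'))) ∧
        L.leaves = (L.leaves ∪ R.leaves).filter fun x => w x u ≤ w x v) ∧
      IsBisection2CenterTreeDissim w L ∧ IsBisection2CenterTreeDissim w R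

end Cuts

/-! ### Pivot algorithms -/

mutual
/-- Trees produced by the fast pivot algorithm (Algorithm 6 of CKMM):
pick a pivot `p`, split the other vertices into classes of equal similarity to `p`
(in strictly decreasing order of similarity), recurse, and attach along a spine. -/
inductive IsPivotTree {V : Type} [DecidableEq V] (w : V → V → ℝ) : ClusterTree V → Prop where
  | mk : ∀ (p : V) (T : ClusterTree V), PivotSpine w p T → IsPivotTree w T

/-- The spine of the pivot algorithm: `PivotSpine w p T` says that `T` is an iterated
union of the single-vertex tree on `p` with pivot trees of the similarity classes of
`p`, attached in strictly decreasing order of similarity to `p`. -/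
inductive PivotSpine {V : Type} [DecidableEq V] (w : V → V → ℝ) : V → ClusterTree V → Prop where
  | base : ∀ p : V, PivotSpine w p (ClusterTree.leaf p)
  | step : ∀ (p : V) (S T : ClusterTree V) (c : ℝ),
      PivotSpine w p S → IsPivotTree w T →
      (∀ v ∈ T.leaves, w p v = c) →
      (∀ u ∈ S.leaves, u ≠ p → c < w p u) →
      PivotSpine w p (ClusterTree.node S T)
end

mutual
/-- Trees produced by the robust pivot algorithm (Algorithm 7 of CKMM). -/
inductive IsRobustPivotTree {V : Type} [DecidableEq V] (w : V → V → ℝ) :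
    ClusterTree V → Prop where
  | mk : ∀ (p : V) (T : ClusterTree V), RobustPivotSpine w T.leaves p T →
      IsRobustPivotTree w T

/-- `RobustPivotSpine w U p T` : `T` is a prefix (a spine) of a run of the robust pivot
algorithm on the vertex set `U`, started at the pivot `p`.  At each step, `wi` is the
maximum weight of an edge in the cut `(Ṽ, U \ Ṽ)` (where `Ṽ` is the set of already
clustered vertices), and the next block is the least subset of `U \ Ṽ` closed under
adding any vertex having an edge of weight at least `wi` into the block or into `Ṽ`. -/
inductive RobustPivotSpine {V : Type} [DecidableEq V] (w : V → V → ℝ) :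
    Finset V → V → ClusterTree V → Prop where
  | base : ∀ (U : Finset V) (p : V), RobustPivotSpine w U p (ClusterTree.leaf p)
  | step : ∀ (U : Finset V) (p : V) (S T : ClusterTree V) (wi : ℝ),
      RobustPivotSpine w U p S →
      IsRobustPivotTree w T →
      (∃ p1 ∈ S.leaves, ∃ p2 ∈ U \ S.leaves, w p1 p2 = wi) →
      (∀ q1 ∈ S.leaves, ∀ q2 ∈ U \ S.leaves, w q1 q2 ≤ wi) →
      T.leaves ⊆ U \ S.leaves →
      (∀ u ∈ U \ S.leaves, (∃ v ∈ T.leaves ∪ S.leaves, wi ≤ w u v) → u ∈ T.leaves) →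
      (∀ C : Finset V, C ⊆ U \ S.leaves →
        (∀ u ∈ U \ S.leaves, (∃ v ∈ C ∪ S.leaves, wi ≤ w u v) → u ∈ C) →
        T.leaves ⊆ C) →
      RobustPivotSpine w U p (ClusterTree.node S T)
end

/-! ### Paths and caterpillars -/

/-- Attach the leaves from the list `l` one by one on top of `t` (a "spine"). -/
def spineTree {V : Type} : ClusterTree V → List V → ClusterTree V
  | t, [] => t
  | t, v :: vs => spineTree (ClusterTree.node t (ClusterTree.leaf v)) vs

/-- The unit-weight path on `n` vertices. -/
def pathW (n : ℕ) (i j : Fin n) : ℝ :=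
  if (i : ℕ) + 1 = (j : ℕ) ∨ (j : ℕ) + 1 = (i : ℕ) then 1 else 0

/-! ### Random graphs: hierarchical stochastic block model -/

/-- Index set for the potential edges of a graph on `Fin n`. -/
abbrev EdgeIdx (n : ℕ) := {p : Fin n × Fin n // p.1 < p.2}

/-- The (0/1) weight function of the random graph described by the edge
configuration `c`. -/
def configW {n : ℕ} (c : EdgeIdx n → Bool) (u v : Fin n) : ℝ :=
  if h : u < v then (if c ⟨(u, v), h⟩ then 1 else 0)
  else if h' : v < u then (if c ⟨(v, u), h'⟩ then 1 else 0)
  else 0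

/-- The probability of the edge configuration `c` when each edge `e` is present
independently with probability `q e`. -/
def configProb {n : ℕ} (q : Fin n → Fin n → ℝ) (c : EdgeIdx n → Bool) : ℝ :=
  ∏ e : EdgeIdx n, if c e then q e.val.1 e.val.2 else 1 - q e.val.1 e.val.2

/-- The expected cost `E[Γ(T) | ψ]` of a fixed cluster tree `T`, over the random
choice of the edges (with edge probabilities `q`). -/
def expectedCost {n : ℕ} (g : ℕ → ℕ → ℝ) (q : Fin n → Fin n → ℝ)
    (T : ClusterTree (Fin n)) : ℝ :=
  ∑ c : EdgeIdx n → Bool, configProb q c * treeCost (configW c) g T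

/-- The (fixed, size-independent) data of a hierarchical stochastic block model with
`k` bottom-level clusters: a generating tree `Ttil` with weights `Wtil` in `(0,1)`
(the graph `G̃ₖ` on `k` vertices generated from an ultrametric), and intra-cluster
probabilities `p i ∈ (0,1]` exceeding the weight of the parent of leaf `i`. -/
structure HSBM (k : ℕ) where
  Ttil : ClusterTree (Fin k)
  Wtil : ClusterTree (Fin k) → ℝ
  p : Fin k → ℝ
  ttil_isClusterTree : IsClusterTree Ttil
  wtil_pos : ∀ L R, IsSubtreeOf (ClusterTree.node L R) Ttil →
    0 < Wtil (ClusterTree.node L R)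
  wtil_lt_one : ∀ L R, IsSubtreeOf (ClusterTree.node L R) Ttil →
    Wtil (ClusterTree.node L R) < 1
  wtil_mono : ∀ L R, IsSubtreeOf (ClusterTree.node L R) Ttil →
    ∀ s, IsSubtreeOf s L ∨ IsSubtreeOf s R → Wtil (ClusterTree.node L R) ≤ Wtil s
  p_pos : ∀ i, 0 < p i
  p_le_one : ∀ i, p i ≤ 1
  p_gt_parent : ∀ L R, IsSubtreeOf (ClusterTree.node L R) Ttil →
    ∀ i : Fin k, L = ClusterTree.leaf i ∨ R = ClusterTree.leaf i →
      Wtil (ClusterTree.node L R) < p i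

/-- The edge probabilities of the HSBM `M` with sparsity `α`, given the assignment
`ψ` of vertices to bottom-level clusters.  These are also the edge weights of the
expected graph `Ḡ`. -/
def HSBM.edgeProb {k : ℕ} (M : HSBM k) (α : ℝ) {n : ℕ} (ψ : Fin n → Fin k) :
    Fin n → Fin n → ℝ := fun u v =>
  if ψ u = ψ v then α * M.p (ψ u)
  else α * M.Wtil (lcaSubtree M.Ttil (ψ u) (ψ v))

/-- The probability of the sample `ω = (ψ, c)` (labels and edges) of the HSBM `M`
with label proportions `f` and sparsity `α`. -/
def hsbmProb {k : ℕ} (M : HSBM k) (f : Fin k → ℝ) (α : ℝ) {n : ℕ}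
    (ω : (Fin n → Fin k) × (EdgeIdx n → Bool)) : ℝ :=
  (∏ v : Fin n, f (ω.1 v)) * configProb (M.edgeProb α ω.1) ω.2

/-- The common cost `κ(n)` of all cluster trees of the unit-weight clique on `n`
vertices (computed on the caterpillar tree). -/
def cliqueTreeCost (g : ℕ → ℕ → ℝ) (n : ℕ) : ℝ :=
  ∑ i ∈ Finset.range n, (i : ℝ) * g i 1

/-- The smoothness property: `max {g(n₁,n₂) : n₁+n₂ = n} = O(κ(n)/n²)`. -/
def SmoothCost (g : ℕ → ℕ → ℝ) : Prop :=
  ∃ C : ℝ, 0 < C ∧ ∀ n1 n2 : ℕ, 1 ≤ n1 → 1 ≤ n2 →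
    g n1 n2 * (((n1 + n2 : ℕ) : ℝ)) ^ 2 ≤ C * cliqueTreeCost g (n1 + n2)

end


/-! The weights of a ground-truth input satisfy the three-point condition
`min (w x z) (w y z) ≤ w x y`. Applied at the pivot `p` it gives `w u v = w p v` whenever
`w p v < w p u`, so at every node of the pivot spine all edges between the tree built so far
and the newly attached class carry that class's weight. Hence every internal node of a pivot
tree has a constant cut weight, and the three-point condition makes these weights
non-increasing towards the root: they form a generating weighting. Optimality for admissible
objectives follows because `w` is also generated by the minimal ultrametric `c - w`. -/

namespace ClusterTree

variable {V : Type}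

def headLeaf : ClusterTree V → V
  | leaf v => v
  | node L _ => headLeaf L

lemma nodup_left_of_nodup {L R : ClusterTree V} (h : (node L R).leavesList.Nodup) :
    L.leavesList.Nodup :=
  (List.nodup_append.mp h).1

lemma nodup_right_of_nodup {L R : ClusterTree V} (h : (node L R).leavesList.Nodup) :
    R.leavesList.Nodup :=
  (List.nodup_append.mp h).2.1

variable [DecidableEq V]

@[simp]
lemma mem_leaves_leaf {v x : V} : x ∈ (leaf v).leaves ↔ x = v := by
  simp [leaves, leavesList]

@[simp]
lemma mem_leaves_node {L R : ClusterTree V} {x : V} :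
    x ∈ (node L R).leaves ↔ x ∈ L.leaves ∨ x ∈ R.leaves := by
  simp [leaves, leavesList]

lemma headLeaf_mem (T : ClusterTree V) : T.headLeaf ∈ T.leaves := by
  induction T with
  | leaf v => simp [headLeaf]
  | node L R ihL _ => exact mem_leaves_node.mpr (Or.inl ihL)

lemma disjoint_leaves_of_nodup {L R : ClusterTree V} (h : (node L R).leavesList.Nodup) :
    Disjoint L.leaves R.leaves := by
  rw [Finset.disjoint_left]
  intro x hxL hxR
  simp only [leaves, List.mem_toFinset] at hxL hxR
  exact (List.nodup_append.mp h).2.2 x hxL x hxR rfl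

lemma headLeaf_ne_of_nodup {L R : ClusterTree V} (h : (node L R).leavesList.Nodup) :
    L.headLeaf ≠ R.headLeaf := fun heq =>
  Finset.disjoint_left.mp (disjoint_leaves_of_nodup h) L.headLeaf_mem (heq ▸ R.headLeaf_mem)

end ClusterTree

open ClusterTree

section Subtrees

variable {V : Type}

lemma IsSubtreeOf.refl (T : ClusterTree V) : IsSubtreeOf T T := by
  cases T with
  | leaf v => rfl
  | node L R => exact Or.inl rfl

lemma IsSubtreeOf.sublist {s T : ClusterTree V} (h : IsSubtreeOf s T) :
    s.leavesList.Sublist T.leavesList := by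
  induction T with
  | leaf v => rw [show s = leaf v from h]
  | node L R ihL ihR =>
    rcases h with rfl | h | h
    · exact List.Sublist.refl _
    · exact (ihL h).trans (List.sublist_append_left _ _)
    · exact (ihR h).trans (List.sublist_append_right _ _)

lemma IsSubtreeOf.leaves_subset [DecidableEq V] {s T : ClusterTree V} (h : IsSubtreeOf s T) :
    s.leaves ⊆ T.leaves := fun x hx => by
  simp only [leaves, List.mem_toFinset] at hx ⊢
  exact h.sublist.subset hx

lemma exists_lcaSubtree_eq_node [DecidableEq V] (T : ClusterTree V) {x y : V}
    (hx : x ∈ T.leaves) (hy : y ∈ T.leaves) (hxy : x ≠ y) :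
    ∃ L R, lcaSubtree T x y = node L R ∧ IsSubtreeOf (node L R) T ∧
      ((x ∈ L.leaves ∧ y ∈ R.leaves) ∨ (y ∈ L.leaves ∧ x ∈ R.leaves)) := by
  induction T with
  | leaf v => exact absurd ((mem_leaves_leaf.mp hx).trans (mem_leaves_leaf.mp hy).symm) hxy
  | node L R ihL ihR =>
    simp only [lcaSubtree]
    by_cases hL : x ∈ L.leaves ∧ y ∈ L.leaves
    · obtain ⟨A, B, heq, hsub, hmem⟩ := ihL hL.1 hL.2
      exact ⟨A, B, by rw [if_pos hL, heq], Or.inr (Or.inl hsub), hmem⟩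
    by_cases hR : x ∈ R.leaves ∧ y ∈ R.leaves
    · obtain ⟨A, B, heq, hsub, hmem⟩ := ihR hR.1 hR.2
      exact ⟨A, B, by rw [if_neg hL, if_pos hR, heq], Or.inr (Or.inr hsub), hmem⟩
    refine ⟨L, R, by rw [if_neg hL, if_neg hR], IsSubtreeOf.refl _, ?_⟩
    rw [mem_leaves_node] at hx hy
    tauto

end Subtrees

section UltrametricSimilarity

variable {V : Type}

/-- Intrinsic form of `GeneratedFromUltrametric`; `generatedFromMinimalUltrametric` is the
converse. -/
structure IsUltrametricSimilarity (w : V → V → ℝ) : Prop where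
  symm : ∀ x y, x ≠ y → w x y = w y x
  nonneg : ∀ x y, x ≠ y → 0 ≤ w x y
  bddAbove : ∃ B, ∀ x y, x ≠ y → w x y ≤ B
  min_le : ∀ x y z, x ≠ y → x ≠ z → y ≠ z → min (w x z) (w y z) ≤ w x y

lemma GeneratedFromUltrametric.isUltrametricSimilarity {w : V → V → ℝ}
    (hw : GeneratedFromUltrametric w) : IsUltrametricSimilarity w := by
  obtain ⟨d, f, ⟨-, -, hd_symm, hd_nonneg, hd_ultra⟩, hf_anti, hf_nonneg, hwf⟩ := hw
  refine ⟨fun x y hxy => ?_, fun x y hxy => ?_, ⟨f 0, fun x y hxy => ?_⟩,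
    fun x y z hxy hxz hyz => ?_⟩
  · rw [hwf x y hxy, hwf y x hxy.symm, hd_symm]
  · rw [hwf x y hxy]
    exact hf_nonneg _ (hd_nonneg x y)
  · rw [hwf x y hxy]
    exact hf_anti 0 _ le_rfl (hd_nonneg x y)
  · rw [hwf x y hxy, hwf x z hxz, hwf y z hyz]
    rcases le_total (d x z) (d y z) with h | h
    · exact min_le_of_right_le <| hf_anti _ _ (hd_nonneg x y) <|
        (hd_ultra x y z).trans (max_le h le_rfl)
    · exact min_le_of_left_le <| hf_anti _ _ (hd_nonneg x y) <|
        (hd_ultra x y z).trans (max_le le_rfl h)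

namespace IsUltrametricSimilarity

variable {w : V → V → ℝ}

lemma eq_of_lt (hw : IsUltrametricSimilarity w) {p u v : V} (hup : u ≠ p) (hvp : v ≠ p)
    (hlt : w p v < w p u) : w u v = w p v := by
  have huv : u ≠ v := by rintro rfl; exact lt_irrefl _ hlt
  have hge : w p v ≤ w u v := by
    have h := hw.min_le u v p huv hup hvp
    rwa [hw.symm u p hup, hw.symm v p hvp, min_eq_right hlt.le] at h
  have hle : w u v ≤ w p v := by
    have h := hw.min_le p v u hvp.symm hup.symm huv.symm
    rw [hw.symm v u huv.symm] at h
    rcases min_le_iff.mp h with h | h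
    · exact absurd h (not_le.mpr hlt)
    · exact h
  exact le_antisymm hle hge

/-- Since `w` is bounded, `d x y = c - w x y` for a large constant `c` is an ultrametric, and
`w = max (c - d) 0` is a strictly decreasing function of it. -/
lemma generatedFromMinimalUltrametric (hw : IsUltrametricSimilarity w) :
    GeneratedFromMinimalUltrametric w := by
  obtain ⟨B, hB⟩ := hw.bddAbove
  set c := max B 0 + 1
  set d : V → V → ℝ := fun x y => if x = y then 0 else c - w x y with hd
  have hd_pos : ∀ x y, x ≠ y → 0 < d x y := fun x y hxy => by
    simp only [hd, if_neg hxy]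
    linarith [hB x y hxy, le_max_left B 0]
  have hd_nonneg : ∀ x y, 0 ≤ d x y := fun x y => by
    by_cases hxy : x = y
    · simp [hd, hxy]
    · exact (hd_pos x y hxy).le
  have hd_symm : ∀ x y, d x y = d y x := fun x y => by
    by_cases hxy : x = y
    · rw [hxy]
    · simp only [hd, if_neg hxy, if_neg (Ne.symm hxy), hw.symm x y hxy]
  have hfd : ∀ x y, x ≠ y → max (c - d x y) 0 = w x y := fun x y hxy => by
    simp only [hd, if_neg hxy, sub_sub_cancel]
    exact max_eq_left (hw.nonneg x y hxy)
  refine ⟨d, fun a => max (c - a) 0, ⟨fun x => if_pos rfl, fun x y h => ?_, hd_symm,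
    hd_nonneg, fun x y z => ?_⟩, fun a b _ hab => max_le_max (by linarith) le_rfl,
    fun a _ => le_max_right _ _, fun x y hxy => (hfd x y hxy).symm,
    fun u v u' v' huv hu'v' h => ?_⟩
  · by_contra hxy
    exact (hd_pos x y hxy).ne' h
  · by_cases hxy : x = y
    · simp only [hd, if_pos hxy]
      exact le_max_of_le_left (hd_nonneg x z)
    by_cases hzx : z = x
    · rw [hzx, hd_symm x y]
      exact le_max_right _ _
    by_cases hzy : z = y
    · rw [hzy]
      exact le_max_left _ _
    simp only [hd, if_neg hxy, if_neg (Ne.symm hzx), if_neg (Ne.symm hzy), max_sub_sub_left]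
    linarith [hw.min_le x y z hxy (Ne.symm hzx) (Ne.symm hzy)]
  · have h' : w u v = w u' v' := by rw [← hfd u v huv, ← hfd u' v' hu'v']; exact h
    simp only [hd, if_neg huv, if_neg hu'v', h']

end IsUltrametricSimilarity

end UltrametricSimilarity

section ConstantCuts

variable {V : Type} [DecidableEq V] {w : V → V → ℝ}

def HasConstantCuts (w : V → V → ℝ) (T : ClusterTree V) : Prop :=
  ∀ L R, IsSubtreeOf (node L R) T →
    ∀ x ∈ L.leaves, ∀ y ∈ R.leaves, w x y = w L.headLeaf R.headLeaf

lemma hasConstantCuts_node {L R : ClusterTree V} (hL : HasConstantCuts w L)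
    (hR : HasConstantCuts w R) (c : ℝ) (hc : ∀ x ∈ L.leaves, ∀ y ∈ R.leaves, w x y = c) :
    HasConstantCuts w (node L R) := by
  rintro A B (heq | hA | hB)
  · obtain ⟨rfl, rfl⟩ := node.inj heq
    intro x hx y hy
    rw [hc x hx y hy, hc _ A.headLeaf_mem _ B.headLeaf_mem]
  · exact hL A B hA
  · exact hR A B hB

lemma PivotSpine.pivot_mem_leaves {p : V} {S : ClusterTree V} (h : PivotSpine w p S) :
    p ∈ S.leaves := by
  induction S with
  | leaf v => cases h; simp
  | node S _ ihS _ =>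
    cases h with
    | step _ _ _ _ hS => exact mem_leaves_node.mpr (Or.inl (ihS hS))

lemma IsPivotTree.hasConstantCuts (hw : IsUltrametricSimilarity w) {T : ClusterTree V}
    (hT : IsPivotTree w T) (hnd : T.leavesList.Nodup) : HasConstantCuts w T := by
  induction T with
  | leaf v => intro L R h; cases h
  | node S B ihS ihB =>
    obtain ⟨p, _, hspine⟩ := hT
    cases hspine with
    | step _ _ _ c hS hB hc hlt =>
      refine hasConstantCuts_node (ihS (.mk p S hS) (nodup_left_of_nodup hnd))
        (ihB hB (nodup_right_of_nodup hnd)) c fun x hx y hy => ?_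
      have hyp : y ≠ p := fun h =>
        Finset.disjoint_left.mp (disjoint_leaves_of_nodup hnd) hS.pivot_mem_leaves (h ▸ hy)
      by_cases hxp : x = p
      · rw [hxp, hc y hy]
      · rw [hw.eq_of_lt hxp hyp (by rw [hc y hy]; exact hlt x hx hxp), hc y hy]

def headLeafWeight (w : V → V → ℝ) (top : ℝ) : ClusterTree V → ℝ
  | leaf _ => top
  | node L R => w L.headLeaf R.headLeaf

namespace IsUltrametricSimilarity

lemma cut_le (hw : IsUltrametricSimilarity w) {L R : ClusterTree V}
    (hnd : (node L R).leavesList.Nodup) {c : ℝ}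
    (hc : ∀ x ∈ L.leaves, ∀ y ∈ R.leaves, w x y = c) {x y : V} (hxy : x ≠ y)
    (hside : (x ∈ L.leaves ∧ y ∈ L.leaves) ∨ (x ∈ R.leaves ∧ y ∈ R.leaves)) : c ≤ w x y := by
  have hdisj := Finset.disjoint_left.mp (disjoint_leaves_of_nodup hnd)
  rcases hside with ⟨hx, hy⟩ | ⟨hx, hy⟩
  · have hz := R.headLeaf_mem
    have h := hw.min_le x y R.headLeaf hxy (fun h => hdisj hx (h ▸ hz))
      (fun h => hdisj hy (h ▸ hz))
    rwa [hc x hx _ hz, hc y hy _ hz, min_self] at h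
  · have hz := L.headLeaf_mem
    have hxz : x ≠ L.headLeaf := fun h => hdisj hz (h ▸ hx)
    have hyz : y ≠ L.headLeaf := fun h => hdisj hz (h ▸ hy)
    have h := hw.min_le x y L.headLeaf hxy hxz hyz
    rwa [hw.symm x _ hxz, hw.symm y _ hyz, hc _ hz x hx, hc _ hz y hy, min_self] at h

/-- An internal node is weighted by its constant cut weight, a leaf by an upper bound of `w`. -/
lemma isGenerating (hw : IsUltrametricSimilarity w) {T : ClusterTree V}
    (hnd : T.leavesList.Nodup) (hT : HasConstantCuts w T) : IsGenerating w T := by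
  obtain ⟨B, hB⟩ := hw.bddAbove
  refine ⟨headLeafWeight w (max B 0), ?_, fun L R hsub s hs => ?_, fun x y hx hy hxy => ?_⟩
  · rintro (_ | ⟨L, R⟩) hs
    · exact le_max_right _ _
    · exact hw.nonneg _ _ (headLeaf_ne_of_nodup (hs.sublist.nodup hnd))
  · have hndLR := hsub.sublist.nodup hnd
    have hs' : IsSubtreeOf s (node L R) := Or.inr hs
    rcases s with _ | ⟨L', R'⟩
    · exact (hB _ _ (headLeaf_ne_of_nodup hndLR)).trans (le_max_left _ _)
    · have hmem : L'.headLeaf ∈ (node L' R').leaves ∧ R'.headLeaf ∈ (node L' R').leaves := by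
        simp [headLeaf_mem]
      refine hw.cut_le hndLR (hT L R hsub) (headLeaf_ne_of_nodup (hs'.sublist.nodup hndLR)) ?_
      rcases hs with h | h
      · exact Or.inl ⟨h.leaves_subset hmem.1, h.leaves_subset hmem.2⟩
      · exact Or.inr ⟨h.leaves_subset hmem.1, h.leaves_subset hmem.2⟩
  · obtain ⟨L, R, heq, hsub, hmem⟩ := exists_lcaSubtree_eq_node T hx hy hxy
    rw [heq]
    rcases hmem with ⟨hxL, hyR⟩ | ⟨hyL, hxR⟩
    · exact hT L R hsub x hxL y hyR
    · rw [hw.symm x y hxy]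
      exact hT L R hsub y hyL x hxR

end IsUltrametricSimilarity

end ConstantCuts

/-- Theorem 11, CKMM: the recursive pivot algorithm outputs a
generating tree on similarity ground-truth inputs (hence a tree of optimal cost for
every admissible objective function); moreover the key structural fact holds: if
`w(p,v) < w(p,u)` then `w(u,v) = w(p,v)`. -/
theorem statement14 {V : Type} [Fintype V] [DecidableEq V] (w : V → V → ℝ)
    (hgt : GeneratedFromUltrametric w) :
    (∀ p u v : V, u ≠ p → v ≠ p → w p v < w p u → w u v = w p v) ∧
    (∀ T : ClusterTree V, IsClusterTree T → IsPivotTree w T →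
      IsGenerating w T ∧
        ∀ g : ℕ → ℕ → ℝ, Admissible g →
          ∀ T' : ClusterTree V, IsClusterTree T' →
            treeCost w g T ≤ treeCost w g T') := by
  have hw := hgt.isUltrametricSimilarity
  refine ⟨fun p u v => hw.eq_of_lt, fun T hT hpivot => ?_⟩
  have hgen : IsGenerating w T := hw.isGenerating hT.1 (hpivot.hasConstantCuts hw hT.1)
  exact ⟨hgen, fun g hg => (hg V w hw.generatedFromMinimalUltrametric T hT).mpr hgen⟩
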